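/- The set W₊ = {(x,y,ẋ,ẏ) : E < E*, W(x,y) > 0} is invariant under the flow of the Hill's lunar problem. -/

import Mathlib

noncomputable def V (α x y : ℝ) : ℝ :=
  -((α + 2) / 2) * x ^ 2 - (α + 2) / (x ^ 2 + y ^ 2) ^ (α / 2)

noncomputable def Vx (α x y : ℝ) : ℝ := deriv (fun t => V α t y) x
noncomputable def Vy (α x y : ℝ) : ℝ := deriv (fun t => V α x t) y

noncomputable def W (α x y : ℝ) : ℝ :=
  (α + 2) * (x ^ 2 - α / (x ^ 2 + y ^ 2) ^ (α / 2))

noncomputable def E (α x y vx vy : ℝ) : ℝ := (1 / 2) * (vx ^ 2 + vy ^ 2) + V α x y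

noncomputable def Estar (α : ℝ) : ℝ := -(1 / 2) * (α + 2) ^ 2 * α ^ (-(α / (α + 2)))

/-
The Jacobi energy is a first integral, so `E < E*` persists along the trajectory. On the curve
`W = 0` one has `x² ρ = α` with `ρ = (x² + y²)^(α/2)`; hence `α ≤ (x² + y²) ρ = ρ^((α+2)/α)`,
i.e. `ρ ≥ α^(α/(α+2))`, and `V = -(α+2)²/(2ρ) ≥ E*`. So `E ≥ V ≥ E*` wherever `W = 0`, and by
the intermediate value theorem `W` keeps the sign it has at `t₀`.
-/

open Real

lemma sq_add_sq_pos_of_prod_ne_zero {a b : ℝ} (h : (a, b) ≠ (0, 0)) : 0 < a ^ 2 + b ^ 2 := by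
  have : a ≠ 0 ∨ b ≠ 0 := by
    contrapose! h
    rw [h.1, h.2]
  rcases this with h | h <;> positivity

theorem Convex.eq_of_hasDerivAt_eq_zero {I : Set ℝ} (hI : Convex ℝ I) {f : ℝ → ℝ}
    (hf : ∀ t ∈ I, HasDerivAt f 0 t) {a b : ℝ} (ha : a ∈ I) (hb : b ∈ I) : f a = f b := by
  have := hI.norm_image_sub_le_of_norm_hasDerivWithin_le (C := 0)
    (fun t ht => (hf t ht).hasDerivWithinAt) (fun _ _ => norm_zero.le) ha hb
  rw [zero_mul, norm_le_zero_iff, sub_eq_zero] at this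
  exact this.symm

section Hill

variable {α : ℝ}

lemma V_eq_rpow_neg (α a b : ℝ) :
    V α a b = -((α + 2) / 2) * a ^ 2 - (α + 2) * (a ^ 2 + b ^ 2) ^ (-(α / 2)) := by
  rw [V, rpow_neg (by positivity), ← div_eq_mul_inv]

lemma hasDerivAt_V_comp {x y : ℝ → ℝ} {x' y' t : ℝ} (hx : HasDerivAt x x' t)
    (hy : HasDerivAt y y' t) (hr : x t ^ 2 + y t ^ 2 ≠ 0) :
    HasDerivAt (fun s => V α (x s) (y s))
      (-(α + 2) * x t * x' +
        α * (α + 2) * (x t * x' + y t * y') * (x t ^ 2 + y t ^ 2) ^ (-(α / 2) - 1)) t := by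
  simp only [V_eq_rpow_neg]
  refine (((hx.fun_pow 2).const_mul _).fun_sub
    ((((hx.fun_pow 2).fun_add (hy.fun_pow 2)).rpow_const (Or.inl hr)).const_mul _)).congr_deriv ?_
  push_cast
  ring

lemma Vx_eq {a b : ℝ} (hr : a ^ 2 + b ^ 2 ≠ 0) :
    Vx α a b = -(α + 2) * a + α * (α + 2) * a * (a ^ 2 + b ^ 2) ^ (-(α / 2) - 1) := by
  have := hasDerivAt_V_comp (α := α) (hasDerivAt_id' a) (hasDerivAt_const a b) hr
  rw [Vx, this.deriv]
  ring

lemma Vy_eq {a b : ℝ} (hr : a ^ 2 + b ^ 2 ≠ 0) :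
    Vy α a b = α * (α + 2) * b * (a ^ 2 + b ^ 2) ^ (-(α / 2) - 1) := by
  have := hasDerivAt_V_comp (α := α) (hasDerivAt_const b a) (hasDerivAt_id' b) hr
  rw [Vy, this.deriv]
  ring

lemma hasDerivAt_V_comp_eq_partials {x y : ℝ → ℝ} {x' y' t : ℝ} (hx : HasDerivAt x x' t)
    (hy : HasDerivAt y y' t) (hr : x t ^ 2 + y t ^ 2 ≠ 0) :
    HasDerivAt (fun s => V α (x s) (y s)) (Vx α (x t) (y t) * x' + Vy α (x t) (y t) * y') t := by
  refine (hasDerivAt_V_comp hx hy hr).congr_deriv ?_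
  rw [Vx_eq hr, Vy_eq hr]
  ring

theorem hasDerivAt_E_comp_eq_zero {x y x' y' x'' y'' : ℝ → ℝ} {t : ℝ}
    (hx : HasDerivAt x (x' t) t) (hy : HasDerivAt y (y' t) t)
    (hx' : HasDerivAt x' (x'' t) t) (hy' : HasDerivAt y' (y'' t) t)
    (hr : x t ^ 2 + y t ^ 2 ≠ 0)
    (heq1 : x'' t - 2 * y' t = -Vx α (x t) (y t))
    (heq2 : y'' t + 2 * x' t = -Vy α (x t) (y t)) :
    HasDerivAt (fun s => E α (x s) (y s) (x' s) (y' s)) 0 t := by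
  refine ((((hx'.fun_pow 2).fun_add (hy'.fun_pow 2)).const_mul _).fun_add
    (hasDerivAt_V_comp_eq_partials hx hy hr)).congr_deriv ?_
  push_cast
  linear_combination x' t * heq1 + y' t * heq2

lemma V_le_E (α a b vx vy : ℝ) : V α a b ≤ E α a b vx vy := by
  rw [E]
  nlinarith [sq_nonneg vx, sq_nonneg vy]

lemma sq_mul_rpow_eq_of_W_eq_zero (hα : 0 < α) {a b : ℝ} (hr : 0 < a ^ 2 + b ^ 2)
    (hW : W α a b = 0) : a ^ 2 * (a ^ 2 + b ^ 2) ^ (α / 2) = α := by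
  have hu : (a ^ 2 + b ^ 2) ^ (α / 2) ≠ 0 := (rpow_pos_of_pos hr _).ne'
  rw [W, mul_eq_zero, sub_eq_zero] at hW
  rcases hW with h | h
  · linarith
  · exact (eq_div_iff hu).mp h

lemma rpow_le_of_W_eq_zero (hα : 0 < α) {a b : ℝ} (hr : 0 < a ^ 2 + b ^ 2) (hW : W α a b = 0) :
    α ^ (α / (α + 2)) ≤ (a ^ 2 + b ^ 2) ^ (α / 2) := by
  have hα_le : α ≤ (a ^ 2 + b ^ 2) ^ (1 + α / 2) :=
    calc α = a ^ 2 * (a ^ 2 + b ^ 2) ^ (α / 2) := (sq_mul_rpow_eq_of_W_eq_zero hα hr hW).symm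
      _ ≤ (a ^ 2 + b ^ 2) * (a ^ 2 + b ^ 2) ^ (α / 2) := by
        gcongr
        exact le_add_of_nonneg_right (sq_nonneg b)
      _ = (a ^ 2 + b ^ 2) ^ (1 + α / 2) := by rw [rpow_add hr, rpow_one]
  calc α ^ (α / (α + 2))
      ≤ ((a ^ 2 + b ^ 2) ^ (1 + α / 2)) ^ (α / (α + 2)) := by gcongr
    _ = (a ^ 2 + b ^ 2) ^ (α / 2) := by
      rw [← rpow_mul hr.le]
      congr 1
      field_simp
      ring

lemma Estar_le_V_of_W_eq_zero (hα : 0 < α) {a b : ℝ} (hr : 0 < a ^ 2 + b ^ 2)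
    (hW : W α a b = 0) : Estar α ≤ V α a b := by
  have hu : 0 < (a ^ 2 + b ^ 2) ^ (α / 2) := rpow_pos_of_pos hr _
  have hV : V α a b = -((α + 2) ^ 2 / 2) / (a ^ 2 + b ^ 2) ^ (α / 2) := by
    have ha := sq_mul_rpow_eq_of_W_eq_zero hα hr hW
    rw [V]
    generalize (a ^ 2 + b ^ 2) ^ (α / 2) = u at hu ha ⊢
    rw [eq_div_of_mul_eq hu.ne' ha]
    field_simp
    ring
  have hEstar : Estar α = -((α + 2) ^ 2 / 2) / α ^ (α / (α + 2)) := by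
    rw [Estar, rpow_neg hα.le]
    field_simp
  rw [hV, hEstar, neg_div, neg_div, neg_le_neg_iff]
  gcongr
  exact rpow_le_of_W_eq_zero hα hr hW

lemma W_ne_zero_of_E_lt_Estar {a b vx vy : ℝ} (hα : 0 < α) (hr : 0 < a ^ 2 + b ^ 2)
    (hE : E α a b vx vy < Estar α) : W α a b ≠ 0 := fun hW =>
  (hE.trans_le ((Estar_le_V_of_W_eq_zero hα hr hW).trans (V_le_E α a b vx vy))).false

lemma continuousOn_W_comp {I : Set ℝ} {x y : ℝ → ℝ} (hx : ContinuousOn x I)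
    (hy : ContinuousOn y I) (hr : ∀ t ∈ I, 0 < x t ^ 2 + y t ^ 2) :
    ContinuousOn (fun t => W α (x t) (y t)) I := by
  have hu := ((hx.pow 2).add (hy.pow 2)).rpow_const (p := α / 2) fun t ht => Or.inl (hr t ht).ne'
  exact continuousOn_const.mul ((hx.pow 2).sub
    (continuousOn_const.div hu fun t ht => (rpow_pos_of_pos (hr t ht) _).ne'))

end Hill

/-- Invariance of `W₊ = {E < E*, W > 0}` under the flow of the Hill's lunar problem. -/
theorem Wplus_invariant (α : ℝ) (hα : 0 < α) (I : Set ℝ) (hI : Convex ℝ I)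
    (x y x' y' x'' y'' : ℝ → ℝ)
    (hx : ∀ t ∈ I, HasDerivAt x (x' t) t) (hy : ∀ t ∈ I, HasDerivAt y (y' t) t)
    (hx' : ∀ t ∈ I, HasDerivAt x' (x'' t) t) (hy' : ∀ t ∈ I, HasDerivAt y' (y'' t) t)
    (hne : ∀ t ∈ I, (x t, y t) ≠ (0, 0))
    (heq1 : ∀ t ∈ I, x'' t - 2 * y' t = -Vx α (x t) (y t))
    (heq2 : ∀ t ∈ I, y'' t + 2 * x' t = -Vy α (x t) (y t))
    (t₀ : ℝ) (ht₀ : t₀ ∈ I)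
    (hE0 : E α (x t₀) (y t₀) (x' t₀) (y' t₀) < Estar α)
    (hW0 : 0 < W α (x t₀) (y t₀)) :
    ∀ t ∈ I, E α (x t) (y t) (x' t) (y' t) < Estar α ∧ 0 < W α (x t) (y t) := by
  have hr : ∀ t ∈ I, 0 < x t ^ 2 + y t ^ 2 := fun t ht => sq_add_sq_pos_of_prod_ne_zero (hne t ht)
  have hE : ∀ t ∈ I, E α (x t) (y t) (x' t) (y' t) < Estar α := fun t ht =>
    (hI.eq_of_hasDerivAt_eq_zero (fun s hs => hasDerivAt_E_comp_eq_zero (hx s hs) (hy s hs)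
      (hx' s hs) (hy' s hs) (hr s hs).ne' (heq1 s hs) (heq2 s hs)) ht ht₀).trans_lt hE0
  have hW : ContinuousOn (fun t => W α (x t) (y t)) I :=
    continuousOn_W_comp (fun t ht => (hx t ht).continuousAt.continuousWithinAt)
      (fun t ht => (hy t ht).continuousAt.continuousWithinAt) hr
  intro t ht
  refine ⟨hE t ht, ?_⟩
  by_contra! hWt
  obtain ⟨s, hs, hWs⟩ := hI.isPreconnected.intermediate_value ht ht₀ hW ⟨hWt, hW0.le⟩
  exact W_ne_zero_of_E_lt_Estar hα (hr s hs) (hE s hs) hWs
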